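/- arXiv:1709.01210 — 4 statements merged into one kernel-verified Lean document; each statement's English description precedes it below -/
import Mathlib

section
/- For 0 < α ≤ 2 and 0 < p < α, the integral ∫_0^∞ (e^{-u^α} - 1) u^{-p-1} du equals -Γ(1 - p/α)/p. -/
/-!
Substituting `v = u ^ α` reduces the integral to `α⁻¹ ∫₀^∞ (e^{-v} - 1) v^{s-1} dv` with
`s = -p/α ∈ (-1, 0)`. Integrating by parts against `v^s / s` turns this into
`s⁻¹ ∫₀^∞ e^{-v} v^s dv = Γ(s + 1) / s = Γ(s)`; the boundary terms vanish and everything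
is integrable because `|e^{-v} - 1| ≤ min v 1`. Finally `Γ(1 - p/α) = (-p/α) Γ(-p/α)`.
-/

open Real MeasureTheory

open Set Filter Topology

lemma abs_exp_neg_sub_one_le_self {x : ℝ} (hx : 0 ≤ x) : |exp (-x) - 1| ≤ x := by
  rw [abs_sub_comm, abs_of_nonneg (by simp [exp_le_one_iff, hx])]
  linarith [add_one_le_exp (-x)]

lemma abs_exp_neg_sub_one_le_one {x : ℝ} (hx : 0 ≤ x) : |exp (-x) - 1| ≤ 1 := by
  rw [abs_sub_comm, abs_of_nonneg (by simp [exp_le_one_iff, hx])]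
  linarith [exp_pos (-x)]

lemma integrableOn_exp_neg_sub_one_mul_rpow {s : ℝ} (hs₁ : -1 < s) (hs₀ : s < 0) :
    IntegrableOn (fun x : ℝ => (exp (-x) - 1) * x ^ (s - 1)) (Ioi 0) := by
  have hcont : ContinuousOn (fun x : ℝ => (exp (-x) - 1) * x ^ (s - 1)) (Ioi 0) := by
    refine ContinuousOn.mul (by fun_prop) (continuousOn_id.rpow_const fun x hx => ?_)
    exact Or.inl (ne_of_gt hx)
  rw [← Ioc_union_Ioi_eq_Ioi zero_le_one]
  refine IntegrableOn.union ?_ ?_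
  · refine ((intervalIntegral.intervalIntegrable_rpow' hs₁).1).mono'
      ((hcont.mono Ioc_subset_Ioi_self).aestronglyMeasurable measurableSet_Ioc) ?_
    refine (ae_restrict_iff' measurableSet_Ioc).2 (.of_forall fun x hx => ?_)
    calc ‖(exp (-x) - 1) * x ^ (s - 1)‖ = |exp (-x) - 1| * x ^ (s - 1) := by
          rw [norm_mul, norm_eq_abs, norm_of_nonneg (rpow_nonneg hx.1.le _)]
      _ ≤ x * x ^ (s - 1) :=
          mul_le_mul_of_nonneg_right (abs_exp_neg_sub_one_le_self hx.1.le) (rpow_nonneg hx.1.le _)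
      _ = x ^ s := by rw [mul_comm, ← rpow_add_one hx.1.ne', sub_add_cancel]
  · refine (integrableOn_Ioi_rpow_of_lt (a := s - 1) (by linarith) one_pos).mono'
      ((hcont.mono (Ioi_subset_Ioi zero_le_one)).aestronglyMeasurable measurableSet_Ioi) ?_
    refine (ae_restrict_iff' measurableSet_Ioi).2 (.of_forall fun x (hx : 1 < x) => ?_)
    calc ‖(exp (-x) - 1) * x ^ (s - 1)‖ = |exp (-x) - 1| * x ^ (s - 1) := by
          rw [norm_mul, norm_eq_abs, norm_of_nonneg (rpow_nonneg (by linarith) _)]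
      _ ≤ 1 * x ^ (s - 1) := mul_le_mul_of_nonneg_right
          (abs_exp_neg_sub_one_le_one (by linarith)) (rpow_nonneg (by linarith) _)
      _ = x ^ (s - 1) := one_mul _

lemma tendsto_exp_neg_sub_one_mul_rpow_nhdsGT_zero {s : ℝ} (hs : -1 < s) :
    Tendsto (fun x : ℝ => (exp (-x) - 1) * x ^ s) (𝓝[>] 0) (𝓝 0) := by
  have hlim : Tendsto (fun x : ℝ => x ^ (s + 1)) (𝓝[>] 0) (𝓝 0) := by
    simpa [zero_rpow (by linarith : s + 1 ≠ 0)] using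
      ((continuousAt_rpow_const 0 (s + 1) (Or.inr (by linarith))).tendsto).mono_left
        nhdsWithin_le_nhds
  refine squeeze_zero_norm' ?_ hlim
  filter_upwards [self_mem_nhdsWithin] with x (hx : 0 < x)
  calc ‖(exp (-x) - 1) * x ^ s‖ = |exp (-x) - 1| * x ^ s := by
        rw [norm_mul, norm_eq_abs, norm_of_nonneg (rpow_nonneg hx.le _)]
    _ ≤ x * x ^ s :=
        mul_le_mul_of_nonneg_right (abs_exp_neg_sub_one_le_self hx.le) (rpow_nonneg hx.le _)
    _ = x ^ (s + 1) := by rw [rpow_add_one hx.ne']; ring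

lemma tendsto_exp_neg_sub_one_mul_rpow_atTop {s : ℝ} (hs : s < 0) :
    Tendsto (fun x : ℝ => (exp (-x) - 1) * x ^ s) atTop (𝓝 0) := by
  simpa using (tendsto_exp_neg_atTop_nhds_zero.sub_const 1).mul
    (tendsto_rpow_neg_atTop (neg_pos.2 hs))

/-- The Cauchy–Saalschütz integral, continuing Euler's integral for `Γ` to `-1 < s < 0`. -/
theorem integral_exp_neg_sub_one_mul_rpow {s : ℝ} (hs₁ : -1 < s) (hs₀ : s < 0) :
    ∫ x in Ioi 0, (exp (-x) - 1) * x ^ (s - 1) = Gamma s := by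
  have hu : ∀ x ∈ Ioi (0 : ℝ), HasDerivAt (fun x => exp (-x) - 1) (-exp (-x)) x :=
    fun x _ => by simpa using ((hasDerivAt_neg x).exp).sub_const 1
  have hv : ∀ x ∈ Ioi (0 : ℝ), HasDerivAt (fun x => x ^ s / s) (x ^ (s - 1)) x := by
    intro x hx
    have h := (hasDerivAt_rpow_const (p := s) (Or.inl (ne_of_gt hx))).div_const s
    rwa [mul_div_cancel_left₀ _ hs₀.ne] at h
  have hGamma : IntegrableOn (fun x => exp (-x) * x ^ s) (Ioi 0) := by
    simpa using GammaIntegral_convergent (s := s + 1) (by linarith)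
  have hu'v : IntegrableOn (fun x => -exp (-x) * (x ^ s / s)) (Ioi 0) := by
    refine IntegrableOn.congr_fun (hGamma.div_const s).neg (fun x _ => ?_) measurableSet_Ioi
    simp only [Pi.neg_apply]; ring
  have hparts := integral_Ioi_mul_deriv_eq_deriv_mul hu hv
    (integrableOn_exp_neg_sub_one_mul_rpow hs₁ hs₀) hu'v
    (by simpa [Pi.mul_def, mul_div_assoc'] using
      (tendsto_exp_neg_sub_one_mul_rpow_nhdsGT_zero hs₁).div_const s)
    (by simpa [Pi.mul_def, mul_div_assoc'] using
      (tendsto_exp_neg_sub_one_mul_rpow_atTop hs₀).div_const s)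
  have hGamma_succ : ∫ x in Ioi 0, exp (-x) * x ^ s = s * Gamma s := by
    rw [← Gamma_add_one hs₀.ne, Gamma_eq_integral (by linarith), add_sub_cancel_right]
  simp_rw [hparts, neg_mul, integral_neg, mul_div_assoc', integral_div, hGamma_succ,
    mul_div_cancel_left₀ _ hs₀.ne, sub_zero, sub_neg_eq_add, zero_add]

theorem integral_exp_neg_rpow_sub_one_mul_rpow {α p : ℝ} (hα : 0 < α) (hp₀ : 0 < p)
    (hpα : p < α) :
    ∫ u in Ioi 0, (exp (-(u ^ α)) - 1) * u ^ (-p - 1) = Gamma (-p / α) / α := by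
  have hsubst := integral_comp_rpow_Ioi_of_pos
    (g := fun v => (exp (-v) - 1) * v ^ (-p / α - 1)) hα
  have hs₁ : -1 < -p / α := by rwa [neg_div, neg_lt_neg_iff, div_lt_one hα]
  rw [integral_exp_neg_sub_one_mul_rpow hs₁ (div_neg_of_neg_of_pos (neg_neg_of_pos hp₀) hα)]
    at hsubst
  rw [← hsubst, eq_div_iff hα.ne', ← integral_mul_const]
  refine setIntegral_congr_fun measurableSet_Ioi fun u (hu : 0 < u) => ?_
  have hpow : u ^ (α - 1) * (u ^ α) ^ (-p / α - 1) = u ^ (-p - 1) := by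
    rw [← rpow_mul hu.le, ← rpow_add hu]
    congr 1
    field_simp
    ring
  simp only [smul_eq_mul, ← hpow]
  ring

theorem stmt_1_general (α p : ℝ) (hα0 : 0 < α) (hp0 : 0 < p) (hpα : p < α) :
    ∫ u in Set.Ioi (0:ℝ), (Real.exp (-(u ^ α)) - 1) * u ^ (-p - 1)
      = -Real.Gamma (1 - p / α) / p := by
  have hs : -p / α ≠ 0 := (div_neg_of_neg_of_pos (neg_neg_of_pos hp0) hα0).ne
  rw [integral_exp_neg_rpow_sub_one_mul_rpow hα0 hp0 hpα,
    show 1 - p / α = -p / α + 1 by ring, Gamma_add_one hs]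
  field_simp

theorem stmt_1 (α p : ℝ) (hα0 : 0 < α) (hα2 : α ≤ 2) (hp0 : 0 < p) (hpα : p < α) :
    ∫ u in Set.Ioi (0:ℝ), (Real.exp (-(u ^ α)) - 1) * u ^ (-p - 1)
      = -Real.Gamma (1 - p / α) / p :=
  stmt_1_general α p hα0 hp0 hpα
end

section
/- For a > 0, b real, and d > -1 with d ≠ 0, ∫_0^∞ u^{d-1} e^{-au} sin(bu) du = Γ(d) (a² + b²)^{-d/2} sin(d·arctan(b/a)), where for -1 < d < 0 the value Γ(d) is defined via Γ(d) = Γ(d+1)/d. -/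
/-!
For `0 < re z` the Laplace transform `∫₀^∞ t^(s-1) e^(-z t) dt` equals `Γ(s) (1/z)^s`: both
sides are holomorphic in `z` on the right half-plane and agree for real `z`, so the identity
theorem extends the real formula. Put `z = a - i b`, so that
`e^(-z u) = e^(-a u) (cos (b u) + i sin (b u))`. For `-1 < d ≤ 0` the complex integral with
exponent `d - 1` diverges at `0` although the sine integral converges, so one integration by
parts first raises the exponent:
`d ∫ u^(d-1) e^(-a u) sin (b u) = ∫ u^d e^(-a u) (a sin (b u) - b cos (b u))
  = Im (z ∫ u^d e^(-z u)) = Γ(d+1) Im ((1/z)^d)`.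
It remains to use `Γ(d+1) = d Γ(d)`, `|1/z| = (a² + b²)^(-1/2)` and `arg (1/z) = arctan (b/a)`.
-/

open Real MeasureTheory Set Filter Topology
open scoped Complex

lemma integrableOn_rpow_mul_exp_neg_mul {s a : ℝ} (hs : -1 < s) (ha : 0 < a) :
    IntegrableOn (fun x : ℝ => x ^ s * exp (-(a * x))) (Ioi 0) := by
  simpa [Real.rpow_one] using integrableOn_rpow_mul_exp_neg_mul_rpow hs one_pos ha

namespace Complex

lemma norm_ofReal_cpow_mul_exp_neg_mul (s z : ℂ) {t : ℝ} (ht : 0 < t) :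
    ‖(t : ℂ) ^ s * cexp (-(z * t))‖ = t ^ s.re * Real.exp (-(z.re * t)) := by
  rw [norm_mul, norm_cpow_eq_rpow_re_of_pos ht, norm_exp]
  simp

lemma integrableOn_cpow_mul_exp_neg_mul {s z : ℂ} (hs : 0 < s.re) (hz : 0 < z.re) :
    IntegrableOn (fun t : ℝ => (t : ℂ) ^ (s - 1) * cexp (-(z * t))) (Ioi 0) := by
  refine (integrableOn_rpow_mul_exp_neg_mul (s := s.re - 1) (by linarith) hz).mono'
    (by fun_prop) ?_
  filter_upwards [ae_restrict_mem measurableSet_Ioi] with t ht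
  rw [norm_ofReal_cpow_mul_exp_neg_mul _ _ ht, sub_re, one_re]

lemma differentiableOn_integral_cpow_mul_exp_neg_mul {s : ℂ} (hs : 0 < s.re) :
    DifferentiableOn ℂ
      (fun z : ℂ => ∫ t in Ioi (0 : ℝ), (t : ℂ) ^ (s - 1) * cexp (-(z * t)))
      {z | 0 < z.re} := by
  intro w (hw : 0 < w.re)
  have hε : 0 < w.re / 2 := by positivity
  have hre_ball : ∀ z ∈ Metric.ball w (w.re / 2), w.re / 2 ≤ z.re := fun z hz => by
    have := (abs_re_le_norm (z - w)).trans (mem_ball_iff_norm.mp hz).le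
    rw [sub_re, abs_le] at this
    linarith
  refine (hasDerivAt_integral_of_dominated_loc_of_deriv_le (Metric.ball_mem_nhds w hε)
    (μ := volume.restrict (Ioi 0)) (F := fun z (t : ℝ) => (t : ℂ) ^ (s - 1) * cexp (-(z * t)))
    (F' := fun z (t : ℝ) => -((t : ℂ) ^ s * cexp (-(z * t))))
    (bound := fun t => t ^ s.re * Real.exp (-(w.re / 2 * t)))
    (.of_forall fun z => by fun_prop) (integrableOn_cpow_mul_exp_neg_mul hs hw)
    (by fun_prop) ?_ (integrableOn_rpow_mul_exp_neg_mul (by linarith) hε) ?_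
    ).2.differentiableAt.differentiableWithinAt
  · filter_upwards [ae_restrict_mem measurableSet_Ioi] with t (ht : 0 < t) z hz
    rw [norm_neg, norm_ofReal_cpow_mul_exp_neg_mul _ _ ht]
    gcongr
    exact hre_ball z hz
  · filter_upwards [ae_restrict_mem measurableSet_Ioi] with t (ht : 0 < t) z _
    have ht' : (t : ℂ) ≠ 0 := ofReal_ne_zero.mpr ht.ne'
    refine ((((hasDerivAt_id z).mul_const (t : ℂ)).neg.cexp).const_mul
      ((t : ℂ) ^ (s - 1))).congr_deriv ?_
    simp only [Pi.neg_apply, id_eq]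
    rw [cpow_sub _ _ ht', cpow_one]
    field_simp

theorem integral_cpow_mul_exp_neg_mul_Ioi_of_re_pos {s z : ℂ} (hs : 0 < s.re) (hz : 0 < z.re) :
    ∫ t in Ioi (0 : ℝ), (t : ℂ) ^ (s - 1) * cexp (-(z * t)) = (1 / z) ^ s * Gamma s := by
  have hU : IsOpen {z : ℂ | 0 < z.re} := isOpen_lt continuous_const continuous_re
  have hrhs : DifferentiableOn ℂ (fun z : ℂ => (1 / z) ^ s * Gamma s) {z | 0 < z.re} := by
    intro z (hz : 0 < z.re)
    have hz0 : z ≠ 0 := fun h => by simp [h] at hz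
    have : 1 / z ∈ slitPlane := mem_slitPlane_iff.mpr <| .inl <| by
      rw [one_div, inv_re]; exact div_pos hz (normSq_pos.mpr hz0)
    exact (((differentiableAt_const _).div differentiableAt_id hz0).cpow_const this
      |>.mul_const _).differentiableWithinAt
  refine (differentiableOn_integral_cpow_mul_exp_neg_mul hs).analyticOnNhd hU
    |>.eqOn_of_preconnected_of_frequently_eq (hrhs.analyticOnNhd hU)
    (convex_halfSpace_re_gt 0).isPreconnected (z₀ := 1) (by simp) ?_ hz
  have hreal : Tendsto ((↑) : ℝ → ℂ) (𝓝[>] 1) (𝓝[≠] 1) :=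
    continuous_ofReal.continuousWithinAt.tendsto_nhdsWithin fun r (hr : 1 < r) => by
      simpa using hr.ne'
  refine hreal.frequently (Eventually.frequently ?_)
  filter_upwards [self_mem_nhdsWithin] with r (hr : 1 < r)
  exact integral_cpow_mul_exp_neg_mul_Ioi hs (by linarith)

lemma arg_eq_arctan_of_re_pos {z : ℂ} (hz : 0 < z.re) : arg z = Real.arctan (z.im / z.re) := by
  have h := abs_lt.mp (abs_arg_lt_pi_div_two_iff.mpr (.inl hz))
  rw [← tan_arg, Real.arctan_tan h.1 h.2]

lemma im_one_div_sub_mul_I_cpow {a : ℝ} (ha : 0 < a) (b d : ℝ) :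
    ((1 / (a - b * I)) ^ (d : ℂ)).im
      = (a ^ 2 + b ^ 2) ^ (-(d / 2)) * Real.sin (d * Real.arctan (b / a)) := by
  have hq : 0 < a ^ 2 + b ^ 2 := by positivity
  have hre : (1 / (a - b * I) : ℂ).re = a / (a ^ 2 + b ^ 2) := by simp [normSq_apply, sq]
  have him : (1 / (a - b * I) : ℂ).im = b / (a ^ 2 + b ^ 2) := by simp [normSq_apply, sq]
  have hnorm : ‖(1 / (a - b * I) : ℂ)‖ = (a ^ 2 + b ^ 2) ^ (-(1 / 2 : ℝ)) := by
    rw [norm_div, norm_one, norm_eq_sqrt_sq_add_sq, Real.rpow_neg hq.le, ← Real.sqrt_eq_rpow,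
      one_div]
    simp
  rw [cpow_ofReal_im, arg_eq_arctan_of_re_pos (by rw [hre]; positivity), hre, him,
    div_div_div_cancel_right₀ hq.ne', hnorm, ← Real.rpow_mul hq.le, mul_comm]
  ring_nf

end Complex

lemma abs_sin_mul_le (b x : ℝ) : |sin (b * x)| ≤ |b| * |x| :=
  abs_sin_le_abs.trans (abs_mul b x).le

lemma abs_mul_sin_sub_mul_cos_le (a b x : ℝ) : |a * sin x - b * cos x| ≤ |a| + |b| := by
  refine (abs_sub _ _).trans (add_le_add ?_ ?_) <;> rw [abs_mul]
  · exact mul_le_of_le_one_right (abs_nonneg a) (abs_sin_le_one x)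
  · exact mul_le_of_le_one_right (abs_nonneg b) (abs_cos_le_one x)

lemma integrableOn_rpow_sub_one_mul_exp_neg_mul_mul_sin {a d : ℝ} (ha : 0 < a) (hd : -1 < d)
    (b : ℝ) :
    IntegrableOn (fun u : ℝ => u ^ (d - 1) * exp (-(a * u)) * sin (b * u)) (Ioi 0) := by
  have hbdd : ∀ u : ℝ, ‖sin (b * u) / u‖ ≤ |b| := fun u => by
    rw [norm_div, norm_eq_abs, norm_eq_abs]
    exact div_le_of_le_mul₀ (abs_nonneg u) (abs_nonneg b) (abs_sin_mul_le b u)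
  refine IntegrableOn.congr_fun ((integrableOn_rpow_mul_exp_neg_mul hd ha).mul_bdd
    (by fun_prop : Measurable fun u => sin (b * u) / u).aestronglyMeasurable (.of_forall hbdd))
    (fun u (hu : 0 < u) => ?_) measurableSet_Ioi
  rw [rpow_sub_one hu.ne']
  field_simp

lemma tendsto_rpow_mul_exp_neg_mul_mul_sin_nhdsGT_zero {a d : ℝ} (ha : 0 ≤ a) (hd : -1 < d)
    (b : ℝ) :
    Tendsto (fun u : ℝ => u ^ d * exp (-(a * u)) * sin (b * u)) (𝓝[>] 0) (𝓝 0) := by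
  have hpow : Tendsto (fun u : ℝ => |b| * u ^ (d + 1)) (𝓝[>] 0) (𝓝 0) := by
    have := ((continuousAt_rpow_const 0 (d + 1) (.inr (by linarith))).tendsto.mono_left
      (nhdsWithin_le_nhds (s := Ioi 0))).const_mul |b|
    rwa [zero_rpow (by linarith), mul_zero] at this
  refine squeeze_zero_norm' ?_ hpow
  filter_upwards [self_mem_nhdsWithin] with u (hu : 0 < u)
  have hexp : exp (-(a * u)) ≤ 1 := exp_le_one_iff.mpr (by nlinarith)
  calc ‖u ^ d * exp (-(a * u)) * sin (b * u)‖
      = u ^ d * exp (-(a * u)) * |sin (b * u)| := by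
        rw [norm_mul, norm_of_nonneg (by positivity), norm_eq_abs]
    _ ≤ u ^ d * 1 * (|b| * u) := by
        gcongr
        simpa [abs_of_pos hu] using abs_sin_mul_le b u
    _ = |b| * u ^ (d + 1) := by rw [rpow_add_one hu.ne']; ring

lemma tendsto_rpow_mul_exp_neg_mul_mul_sin_atTop {a : ℝ} (ha : 0 < a) (d b : ℝ) :
    Tendsto (fun u : ℝ => u ^ d * exp (-(a * u)) * sin (b * u)) atTop (𝓝 0) := by
  have hsin : IsBoundedUnder (· ≤ ·) atTop fun u => ‖sin (b * u)‖ :=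
    isBoundedUnder_of ⟨1, fun u => by simpa using abs_sin_le_one (b * u)⟩
  simpa only [neg_mul] using
    (tendsto_rpow_mul_exp_neg_mul_atTop_nhds_zero d a ha).zero_mul_isBoundedUnder_le hsin

lemma hasDerivAt_rpow_mul_exp_neg_mul_mul_sin {u : ℝ} (hu : 0 < u) (a b d : ℝ) :
    HasDerivAt (fun u : ℝ => u ^ d * exp (-(a * u)) * sin (b * u))
      (d * (u ^ (d - 1) * exp (-(a * u)) * sin (b * u))
        - u ^ d * exp (-(a * u)) * (a * sin (b * u) - b * cos (b * u))) u := by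
  have hpow := hasDerivAt_rpow_const (p := d) (.inl hu.ne')
  have hexp := ((hasDerivAt_id u).const_mul a).neg.exp
  have hsin := ((hasDerivAt_id u).const_mul b).sin
  refine ((hpow.mul hexp).mul hsin).congr_deriv ?_
  simp only [id_eq, mul_one, Pi.neg_apply, Pi.mul_apply]
  ring

lemma mul_integral_rpow_sub_one_mul_exp_neg_mul_mul_sin {a d : ℝ} (ha : 0 < a) (hd : -1 < d)
    (b : ℝ) :
    d * ∫ u in Ioi (0 : ℝ), u ^ (d - 1) * exp (-(a * u)) * sin (b * u)
      = ∫ u in Ioi (0 : ℝ), u ^ d * exp (-(a * u)) * (a * sin (b * u) - b * cos (b * u)) := by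
  have hint₁ := (integrableOn_rpow_sub_one_mul_exp_neg_mul_mul_sin ha hd b).const_mul d
  have hint₂ : IntegrableOn
      (fun u : ℝ => u ^ d * exp (-(a * u)) * (a * sin (b * u) - b * cos (b * u))) (Ioi 0) :=
    (integrableOn_rpow_mul_exp_neg_mul hd ha).mul_bdd (c := |a| + |b|) (by fun_prop)
      (.of_forall fun u => abs_mul_sin_sub_mul_cos_le a b (b * u))
  have hcont :
      ContinuousWithinAt (fun u : ℝ => u ^ d * exp (-(a * u)) * sin (b * u)) (Ici 0) 0 := by
    rw [← continuousWithinAt_Ioi_iff_Ici, ContinuousWithinAt]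
    simpa only [mul_zero, neg_zero, exp_zero, mul_one, sin_zero] using
      tendsto_rpow_mul_exp_neg_mul_mul_sin_nhdsGT_zero ha.le hd b
  have hFTC := integral_Ioi_of_hasDerivAt_of_tendsto hcont
    (fun u hu => hasDerivAt_rpow_mul_exp_neg_mul_mul_sin hu a b d) (hint₁.sub hint₂)
    (tendsto_rpow_mul_exp_neg_mul_mul_sin_atTop ha d b)
  rw [integral_sub hint₁ hint₂, integral_const_mul] at hFTC
  simp only [mul_zero, neg_zero, exp_zero, mul_one, sin_zero, sub_self] at hFTC
  linarith

lemma integral_rpow_mul_exp_neg_mul_mul_sin_sub_cos {a d : ℝ} (ha : 0 < a) (hd : -1 < d)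
    (b : ℝ) :
    ∫ u in Ioi (0 : ℝ), u ^ d * exp (-(a * u)) * (a * sin (b * u) - b * cos (b * u))
      = Gamma (d + 1) * ((1 / (a - b * Complex.I)) ^ (d : ℂ)).im := by
  set z : ℂ := a - b * Complex.I
  have hz : 0 < z.re := by simpa [z] using ha
  have hz0 : z ≠ 0 := fun h => by simp [h] at hz
  have hs : 0 < ((d : ℂ) + 1).re := by
    rw [Complex.add_re, Complex.ofReal_re, Complex.one_re]; linarith
  have hint := Complex.integrableOn_cpow_mul_exp_neg_mul hs hz
  have hlap := Complex.integral_cpow_mul_exp_neg_mul_Ioi_of_re_pos hs hz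
  rw [add_sub_cancel_right] at hint hlap
  calc ∫ u in Ioi (0 : ℝ), u ^ d * exp (-(a * u)) * (a * sin (b * u) - b * cos (b * u))
      = ∫ u in Ioi (0 : ℝ), (z * ((u : ℂ) ^ (d : ℂ) * cexp (-(z * u)))).im := by
        refine setIntegral_congr_fun measurableSet_Ioi fun u (hu : 0 < u) => ?_
        rw [← Complex.ofReal_cpow hu.le]
        simp only [Complex.mul_im, Complex.sub_re, Complex.ofReal_re, Complex.mul_re, Complex.I_re,
          mul_zero, Complex.ofReal_im, Complex.I_im, mul_one, sub_self, sub_zero, Complex.exp_im,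
          Complex.neg_re, Complex.sub_im, add_zero, zero_sub, Complex.neg_im, neg_mul, zero_add,
          neg_neg, Complex.exp_re, zero_mul, z]
        ring
    _ = (z * ∫ u in Ioi (0 : ℝ), (u : ℂ) ^ (d : ℂ) * cexp (-(z * u))).im := by
        rw [← integral_const_mul]
        exact Complex.imCLM.integral_comp_comm (hint.const_mul z)
    _ = Gamma (d + 1) * ((1 / z) ^ (d : ℂ)).im := by
        rw [hlap, Complex.cpow_add _ _ (one_div_ne_zero hz0), Complex.cpow_one,
          show (d : ℂ) + 1 = ((d + 1 : ℝ) : ℂ) by push_cast; rfl, Complex.Gamma_ofReal,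
          ← Complex.im_ofReal_mul]
        congr 1
        field_simp

theorem stmt_4 (a b d : ℝ) (ha : 0 < a) (hd : -1 < d) (hd0 : d ≠ 0) :
    ∫ u in Set.Ioi (0:ℝ), u ^ (d - 1) * Real.exp (-(a * u)) * Real.sin (b * u)
      = Real.Gamma d * (a ^ 2 + b ^ 2) ^ (-(d / 2)) * Real.sin (d * Real.arctan (b / a)) := by
  have h := mul_integral_rpow_sub_one_mul_exp_neg_mul_mul_sin ha hd b
  rw [integral_rpow_mul_exp_neg_mul_mul_sin_sub_cos ha hd, Complex.im_one_div_sub_mul_I_cpow ha,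
    Gamma_add_one hd0, mul_assoc d] at h
  rw [mul_left_cancel₀ hd0 h, mul_assoc]
end

section
/- For 0 < α < 2, α ≠ 1, -1 ≤ β ≤ 1, let θ₀ = α^{-1} arctan(β tan(πα/2)) and d > 0. Then ∫_0^∞ cos(β tan(πα/2) r^α) r^{d-1} e^{-r^α} dr = (cos αθ₀)^{d/α} cos(dθ₀) Γ(1 + d/α)/d. -/
/-!
Substituting `t = r ^ α` turns the integral into `α⁻¹ ∫₀^∞ cos (b t) t ^ (s - 1) e^{-t} dt` with
`b = β tan (πα/2)` and `s = d/α`, the real part of `∫₀^∞ t ^ (s - 1) e^{-(1 - b i) t} dt`.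
The Gamma integral `∫₀^∞ t ^ (a - 1) e^{-c t} dt = (1/c) ^ a Γ(a)`, known for real `c > 0`,
extends to `Re c > 0` by the identity theorem, both sides being holomorphic in `c`.
Since `(1 - b i)⁻¹ = cos θ · e^{iθ}` with `θ = arctan b`, the real part of `(1 - b i)^{-s} Γ(s)`
is `cos θ ^ s cos (s θ) Γ(s)`; finally `Γ(1 + s) = s Γ(s)`.
-/

open Real MeasureTheory Set Filter Topology

theorem integral_rpow_smul_comp_rpow_Ioi {E : Type*} [NormedAddCommGroup E] [NormedSpace ℝ E]
    (g : ℝ → E) {p : ℝ} (hp : 0 < p) (d : ℝ) :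
    ∫ r in Ioi 0, r ^ (d - 1) • g (r ^ p) = p⁻¹ • ∫ t in Ioi 0, t ^ (d / p - 1) • g t := by
  rw [← integral_comp_rpow_Ioi_of_pos (g := fun t => t ^ (d / p - 1) • g t) hp, ← integral_smul]
  refine setIntegral_congr_fun measurableSet_Ioi fun r (hr : 0 < r) => ?_
  rw [smul_smul, smul_smul, ← rpow_mul hr.le, ← mul_assoc, inv_mul_cancel₀ hp.ne', one_mul,
    ← rpow_add hr]
  congr 2
  field_simp
  ring

namespace Complex

theorem norm_cpow_mul_exp_neg_mul {t : ℝ} (ht : 0 < t) (a c : ℂ) :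
    ‖(t : ℂ) ^ a * exp (-(c * t))‖ = t ^ a.re * Real.exp (-(c.re * t)) := by
  rw [norm_mul, norm_cpow_eq_rpow_re_of_pos ht, norm_exp]
  simp

variable {a : ℂ}

theorem integrableOn_cpow_mul_exp_neg_mul_Ioi (ha : 0 < a.re) {c : ℂ} (hc : 0 < c.re) :
    IntegrableOn (fun t : ℝ => (t : ℂ) ^ (a - 1) * exp (-(c * t))) (Ioi 0) := by
  have hbound : IntegrableOn (fun t : ℝ => t ^ (a - 1).re * Real.exp (-(c.re * t))) (Ioi 0) := by
    simpa [neg_mul] using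
      integrableOn_rpow_mul_exp_neg_mul_rpow (s := (a - 1).re) (by simpa using ha) one_pos hc
  refine hbound.mono' (by fun_prop) ?_
  filter_upwards [ae_restrict_mem measurableSet_Ioi] with t (ht : 0 < t)
  rw [norm_cpow_mul_exp_neg_mul ht]

theorem hasDerivAt_cpow_mul_exp_neg_mul {t : ℝ} (ht : 0 < t) (a c : ℂ) :
    HasDerivAt (fun c : ℂ => (t : ℂ) ^ (a - 1) * exp (-(c * t)))
      (-((t : ℂ) ^ a * exp (-(c * t)))) c := by
  have ht' : (t : ℂ) ≠ 0 := ofReal_ne_zero.mpr ht.ne'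
  refine ((((hasDerivAt_id' c).mul_const (t : ℂ)).neg.cexp).const_mul _).congr_deriv ?_
  rw [cpow_sub _ _ ht', cpow_one, Pi.neg_apply]
  field_simp

theorem differentiableOn_integral_cpow_mul_exp_neg_mul_Ioi (ha : 0 < a.re) :
    DifferentiableOn ℂ (fun c : ℂ => ∫ t in Ioi (0 : ℝ), (t : ℂ) ^ (a - 1) * exp (-(c * t)))
      {c | 0 < c.re} := by
  intro c₀ (hc₀ : 0 < c₀.re)
  obtain ⟨ε, hε, hre⟩ : ∃ ε > 0, ∀ c ∈ Metric.ball c₀ ε, ε < c.re := by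
    refine ⟨c₀.re / 2, half_pos hc₀, fun c hc => ?_⟩
    have h := abs_re_le_norm (c - c₀)
    rw [mem_ball_iff_norm] at hc
    rw [sub_re] at h
    linarith [neg_abs_le (c.re - c₀.re)]
  have hbound : IntegrableOn (fun t : ℝ => t ^ a.re * Real.exp (-(ε * t))) (Ioi 0) := by
    simpa [neg_mul] using
      integrableOn_rpow_mul_exp_neg_mul_rpow (s := a.re) (by linarith) one_pos hε
  have hF' : IntegrableOn (fun t : ℝ => -((t : ℂ) ^ a * exp (-(c₀ * t)))) (Ioi 0) := by
    have ha' : 0 < (a + 1).re := by rw [add_re, one_re]; linarith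
    simpa using (integrableOn_cpow_mul_exp_neg_mul_Ioi ha' hc₀).neg
  have h := hasDerivAt_integral_of_dominated_loc_of_deriv_le (Metric.ball_mem_nhds c₀ hε)
    (F := fun c (t : ℝ) => (t : ℂ) ^ (a - 1) * exp (-(c * t)))
    (F' := fun c (t : ℝ) => -((t : ℂ) ^ a * exp (-(c * t))))
    (Eventually.of_forall fun c => by fun_prop)
    (integrableOn_cpow_mul_exp_neg_mul_Ioi ha hc₀) hF'.aestronglyMeasurable ?_ hbound ?_
  · exact h.2.differentiableAt.differentiableWithinAt
  · filter_upwards [ae_restrict_mem measurableSet_Ioi] with t (ht : 0 < t) c hc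
    rw [norm_neg, norm_cpow_mul_exp_neg_mul ht]
    gcongr
    exact (hre c hc).le
  · filter_upwards [ae_restrict_mem measurableSet_Ioi] with t (ht : 0 < t) c _
    exact hasDerivAt_cpow_mul_exp_neg_mul ht a c

theorem integral_cpow_mul_exp_neg_mul_Ioi_of_re_pos_s9 (ha : 0 < a.re) {c : ℂ} (hc : 0 < c.re) :
    ∫ t in Ioi (0 : ℝ), (t : ℂ) ^ (a - 1) * exp (-(c * t)) = (1 / c) ^ a * Gamma a := by
  have hU : IsOpen {c : ℂ | 0 < c.re} := isOpen_lt continuous_const continuous_re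
  have hlhs := (differentiableOn_integral_cpow_mul_exp_neg_mul_Ioi ha).analyticOnNhd hU
  have hrhs : AnalyticOnNhd ℂ (fun c : ℂ => (1 / c) ^ a * Gamma a) {c | 0 < c.re} := by
    refine DifferentiableOn.analyticOnNhd (fun z (hz : 0 < z.re) => ?_) hU
    have hz0 : z ≠ 0 := fun h => by simp [h] at hz
    have hslit : 1 / z ∈ slitPlane :=
      Or.inl (by rw [one_div, inv_re]; exact div_pos hz (normSq_pos.mpr hz0))
    exact ((((differentiableAt_const 1).div differentiableAt_fun_id hz0).cpow_const
      hslit).mul_const _).differentiableWithinAt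
  have hreal : Tendsto ((↑) : ℝ → ℂ) (𝓝[≠] 1) (𝓝[≠] 1) := by
    rw [tendsto_nhdsWithin_iff]
    exact ⟨tendsto_nhdsWithin_of_tendsto_nhds continuous_ofReal.continuousAt,
      eventually_nhdsWithin_iff.mpr (Eventually.of_forall fun t ht => ofReal_ne_one.mpr ht)⟩
  refine hlhs.eqOn_of_preconnected_of_frequently_eq hrhs
    (convex_halfSpace_re_gt 0).isPreconnected (z₀ := 1) (by simp) (hreal.frequently ?_) hc
  refine (Eventually.filter_mono nhdsWithin_le_nhds ?_).frequently
  filter_upwards [eventually_gt_nhds one_pos] with r hr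
  exact integral_cpow_mul_exp_neg_mul_Ioi ha hr

theorem inv_one_sub_mul_I_eq_polar (b : ℝ) :
    (1 - b * I)⁻¹ = (Real.cos (Real.arctan b) : ℂ) *
      (Real.cos (Real.arctan b) + Real.sin (Real.arctan b) * I) := by
  have hb : (0 : ℝ) < 1 + b ^ 2 := by positivity
  have hsq : ((√(1 + b ^ 2) : ℝ) : ℂ) ^ 2 = 1 + b ^ 2 := by
    rw [← ofReal_pow, sq_sqrt hb.le]; push_cast; ring
  have hsq0 : ((√(1 + b ^ 2) : ℝ) : ℂ) ≠ 0 := ofReal_ne_zero.mpr (sqrt_pos.mpr hb).ne'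
  have hne : (1 : ℂ) - b * I ≠ 0 := fun h => by simpa using congrArg re h
  rw [Real.cos_arctan, Real.sin_arctan]
  push_cast
  field_simp
  linear_combination hsq + b ^ 2 * I_sq

theorem norm_inv_one_sub_mul_I (b : ℝ) : ‖(1 - b * I)⁻¹‖ = Real.cos (Real.arctan b) := by
  rw [inv_one_sub_mul_I_eq_polar, norm_mul, norm_real, ofReal_cos, ofReal_sin,
    norm_cos_add_sin_mul_I, mul_one, Real.norm_of_nonneg (Real.cos_arctan_pos b).le]

theorem arg_inv_one_sub_mul_I (b : ℝ) : arg (1 - b * I)⁻¹ = Real.arctan b := by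
  rw [inv_one_sub_mul_I_eq_polar, arg_real_mul _ (Real.cos_arctan_pos b), ofReal_cos,
    ofReal_sin, arg_cos_add_sin_mul_I]
  constructor <;> linarith [Real.neg_pi_div_two_lt_arctan b, Real.arctan_lt_pi_div_two b, pi_pos]

end Complex

theorem integral_cos_mul_mul_rpow_mul_exp_neg_Ioi {s : ℝ} (hs : 0 < s) (b : ℝ) :
    ∫ t in Ioi 0, cos (b * t) * t ^ (s - 1) * exp (-t)
      = cos (arctan b) ^ s * cos (s * arctan b) * Gamma s := by
  have hs' : 0 < (s : ℂ).re := by simpa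
  have hc : 0 < (1 - b * Complex.I).re := by simp
  have h := congrArg Complex.re (Complex.integral_cpow_mul_exp_neg_mul_Ioi_of_re_pos_s9 hs' hc)
  rw [← RCLike.re_to_complex,
    ← integral_re (Complex.integrableOn_cpow_mul_exp_neg_mul_Ioi hs' hc)] at h
  convert h using 1
  · refine setIntegral_congr_fun measurableSet_Ioi fun t (ht : 0 < t) => ?_
    rw [show (s : ℂ) - 1 = ((s - 1 : ℝ) : ℂ) by push_cast; ring, ← Complex.ofReal_cpow ht.le,
      RCLike.re_to_complex, Complex.re_ofReal_mul, Complex.exp_re]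
    have hre : (-((1 - b * Complex.I) * t)).re = -t := by simp
    have him : (-((1 - b * Complex.I) * t)).im = b * t := by simp
    rw [hre, him]
    ring
  · rw [Complex.Gamma_ofReal, Complex.re_mul_ofReal, Complex.cpow_ofReal_re, one_div,
      Complex.norm_inv_one_sub_mul_I, Complex.arg_inv_one_sub_mul_I, mul_comm (arctan b)]

theorem stmt_9_general (α β d : ℝ) (hα0 : 0 < α) (hd : 0 < d) :
    ∫ r in Set.Ioi (0:ℝ),
        Real.cos (β * Real.tan (Real.pi * α / 2) * r ^ α) * r ^ (d - 1) * Real.exp (-(r ^ α))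
      = (Real.cos (α * (α⁻¹ * Real.arctan (β * Real.tan (Real.pi * α / 2))))) ^ (d / α)
          * Real.cos (d * (α⁻¹ * Real.arctan (β * Real.tan (Real.pi * α / 2))))
          * Real.Gamma (1 + d / α) / d := by
  set b := β * tan (π * α / 2)
  have hs : 0 < d / α := div_pos hd hα0
  have hsmul : ∀ x y : ℝ, cos (b * y) * x * exp (-y) = x • (cos (b * y) * exp (-y)) :=
    fun x y => by rw [smul_eq_mul]; ring
  calc _ = α⁻¹ • ∫ t in Ioi 0, t ^ (d / α - 1) • (cos (b * t) * exp (-t)) := by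
        simp_rw [hsmul]
        exact integral_rpow_smul_comp_rpow_Ioi (fun t => cos (b * t) * exp (-t)) hα0 d
    _ = α⁻¹ * (cos (arctan b) ^ (d / α) * cos (d / α * arctan b) * Gamma (d / α)) := by
        simp_rw [← hsmul, smul_eq_mul]
        rw [integral_cos_mul_mul_rpow_mul_exp_neg_Ioi hs]
    _ = _ := by
        rw [add_comm, Gamma_add_one hs.ne', mul_inv_cancel_left₀ hα0.ne']
        field_simp

theorem stmt_9 (α β d : ℝ) (hα0 : 0 < α) (hα2 : α < 2) (hα1 : α ≠ 1)
    (hβ : β ∈ Set.Icc (-1 : ℝ) 1) (hd : 0 < d) :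
    ∫ r in Set.Ioi (0:ℝ),
        Real.cos (β * Real.tan (Real.pi * α / 2) * r ^ α) * r ^ (d - 1) * Real.exp (-(r ^ α))
      = (Real.cos (α * (α⁻¹ * Real.arctan (β * Real.tan (Real.pi * α / 2))))) ^ (d / α)
          * Real.cos (d * (α⁻¹ * Real.arctan (β * Real.tan (Real.pi * α / 2))))
          * Real.Gamma (1 + d / α) / d :=
  stmt_9_general α β d hα0 hd
end

section
/- For 0 < α < 2, α ≠ 1, -1 ≤ β ≤ 1, and θ₀ = α^{-1} arctan(β tan(πα/2)): ∫_0^∞ [cos(-β tan(πα/2) r^α) - 1] r^{-1} e^{-r^α} dr = (1/α) ln(cos αθ₀). -/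
open Real MeasureTheory Set Filter Metric

lemma exp_neg_int : IntegrableOn (fun s : ℝ => Real.exp (-s)) (Set.Ioi (0:ℝ)) := by
  simpa using exp_neg_integrableOn_Ioi (b := 1) 0 one_pos

lemma sin_exp_integrable (c : ℝ) :
    IntegrableOn (fun s => Real.sin (c * s) * Real.exp (-s)) (Set.Ioi (0:ℝ)) := by
  refine exp_neg_int.mono' ?_ ?_
  · exact ((measurable_const.mul measurable_id).sin.mul
      measurable_id.neg.exp).aestronglyMeasurable
  · filter_upwards with s
    rw [norm_mul, Real.norm_eq_abs, Real.norm_eq_abs, abs_of_pos (Real.exp_pos _)]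
    exact mul_le_of_le_one_left (Real.exp_pos _).le (Real.abs_sin_le_one _)

lemma sin_exp_integral (c : ℝ) :
    ∫ s in Set.Ioi (0:ℝ), Real.sin (c * s) * Real.exp (-s) = c / (1 + c ^ 2) := by
  have hden : (0:ℝ) < 1 + c ^ 2 := by positivity
  set f : ℝ → ℝ := fun s =>
    -((Real.exp (-s) * (Real.sin (c * s) + c * Real.cos (c * s))) / (1 + c ^ 2)) with hf
  have hderiv : ∀ s ∈ Set.Ici (0:ℝ), HasDerivAt f (Real.sin (c * s) * Real.exp (-s)) s := by
    intro s _
    have hexp : HasDerivAt (fun s : ℝ => Real.exp (-s)) (Real.exp (-s) * (-1)) s :=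
      ((hasDerivAt_id s).neg).exp
    have hsin : HasDerivAt (fun s : ℝ => Real.sin (c * s)) (Real.cos (c * s) * c) s := by
      simpa using ((hasDerivAt_id s).const_mul c).sin
    have hcos : HasDerivAt (fun s : ℝ => Real.cos (c * s)) (-Real.sin (c * s) * c) s := by
      simpa using ((hasDerivAt_id s).const_mul c).cos
    have h := (((hexp.mul (hsin.add (hcos.const_mul c))).div_const (1 + c ^ 2)).neg)
    refine h.congr_deriv ?_
    simp only [Pi.add_apply]
    field_simp
    ring
  have hbound : ∀ s : ℝ, ‖f s‖ ≤ Real.exp (-s) * ((1 + |c|) / (1 + c ^ 2)) := by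
    intro s
    have h1 : |Real.sin (c * s) + c * Real.cos (c * s)| ≤ 1 + |c| := by
      calc |Real.sin (c * s) + c * Real.cos (c * s)|
          ≤ |Real.sin (c * s)| + |c * Real.cos (c * s)| := abs_add_le _ _
        _ ≤ 1 + |c| * 1 := by
            rw [abs_mul]
            gcongr
            · exact Real.abs_sin_le_one _
            · exact Real.abs_cos_le_one _
        _ = 1 + |c| := by ring
    have h2 : ‖f s‖ = Real.exp (-s) * |Real.sin (c * s) + c * Real.cos (c * s)| / (1 + c ^ 2) := by
      rw [hf]
      simp only [Real.norm_eq_abs, abs_neg, abs_div, abs_mul,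
        abs_of_pos (Real.exp_pos _), abs_of_pos hden]
    rw [h2, mul_div_assoc]
    gcongr
  have htend : Tendsto f atTop (nhds 0) := by
    have hg : Tendsto (fun s : ℝ => Real.exp (-s) * ((1 + |c|) / (1 + c ^ 2)))
        atTop (nhds 0) := by
      simpa using Real.tendsto_exp_neg_atTop_nhds_zero.mul_const ((1 + |c|) / (1 + c ^ 2))
    exact squeeze_zero_norm hbound hg
  have h := integral_Ioi_of_hasDerivAt_of_tendsto' hderiv (sin_exp_integrable c) htend
  rw [h, hf]
  simp

lemma F_meas (c : ℝ) : AEStronglyMeasurable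
    (fun s : ℝ => (Real.cos (c * s) - 1) * s⁻¹ * Real.exp (-s))
    (volume.restrict (Set.Ioi (0:ℝ))) :=
  ((((measurable_const.mul measurable_id).cos.sub measurable_const).mul
    measurable_inv).mul measurable_id.neg.exp).aestronglyMeasurable

lemma F_integrable (c : ℝ) :
    IntegrableOn (fun s => (Real.cos (c * s) - 1) * s⁻¹ * Real.exp (-s)) (Set.Ioi (0:ℝ)) := by
  have hG : IntegrableOn (fun s : ℝ => c ^ 2 / 2 * (Real.exp (-s) * s ^ ((2:ℝ) - 1)))
      (Set.Ioi (0:ℝ)) :=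
    (Real.GammaIntegral_convergent (by norm_num : (0:ℝ) < 2)).const_mul _
  refine hG.mono' (F_meas c) ?_
  rw [ae_restrict_iff' measurableSet_Ioi]
  filter_upwards with s hs
  have hs0 : (0:ℝ) < s := hs
  have h1 : |Real.cos (c * s) - 1| ≤ (c * s) ^ 2 / 2 := by
    rw [abs_sub_comm, abs_of_nonneg (by linarith [Real.cos_le_one (c * s)])]
    have := Real.one_sub_sq_div_two_le_cos (x := c * s)
    linarith
  have : ‖(Real.cos (c * s) - 1) * s⁻¹ * Real.exp (-s)‖
      = |Real.cos (c * s) - 1| * s⁻¹ * Real.exp (-s) := by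
    rw [norm_mul, norm_mul, Real.norm_eq_abs, Real.norm_eq_abs, Real.norm_eq_abs,
      abs_of_pos (Real.exp_pos _), abs_of_pos (inv_pos.mpr hs0)]
  have h2 : s ^ ((2:ℝ) - 1) = s := by norm_num
  rw [this, h2]
  calc |Real.cos (c * s) - 1| * s⁻¹ * Real.exp (-s)
      ≤ (c * s) ^ 2 / 2 * s⁻¹ * Real.exp (-s) := by gcongr
    _ = c ^ 2 / 2 * (Real.exp (-s) * s) := by field_simp

lemma F_value (c : ℝ) :
    ∫ s in Set.Ioi (0:ℝ), (Real.cos (c * s) - 1) * s⁻¹ * Real.exp (-s)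
      = -(1/2) * Real.log (1 + c ^ 2) := by
  set F : ℝ → ℝ := fun c => ∫ s in Set.Ioi (0:ℝ),
    (Real.cos (c * s) - 1) * s⁻¹ * Real.exp (-s) with hFdef
  have hF : ∀ c : ℝ, HasDerivAt F (-(c / (1 + c ^ 2))) c := by
    intro c
    have key := hasDerivAt_integral_of_dominated_loc_of_deriv_le
      (μ := volume.restrict (Set.Ioi (0:ℝ))) (x₀ := c)
      (F := fun x s => (Real.cos (x * s) - 1) * s⁻¹ * Real.exp (-s))
      (F' := fun x s => -(Real.sin (x * s) * Real.exp (-s)))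
      (bound := fun s => Real.exp (-s)) (ball_mem_nhds c one_pos)
      (Eventually.of_forall fun x => F_meas x) (F_integrable c)
      (((measurable_const.mul measurable_id).sin.mul
        measurable_id.neg.exp).neg.aestronglyMeasurable)
      ?_ exp_neg_int ?_
    · have := key.2
      have heq : (∫ s in Set.Ioi (0:ℝ), -(Real.sin (c * s) * Real.exp (-s)))
          = -(c / (1 + c ^ 2)) := by
        rw [integral_neg, sin_exp_integral]
      rwa [heq] at this
    · filter_upwards with s
      intro x _
      rw [norm_neg, norm_mul, Real.norm_eq_abs, Real.norm_eq_abs,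
        abs_of_pos (Real.exp_pos _)]
      exact mul_le_of_le_one_left (Real.exp_pos _).le (Real.abs_sin_le_one _)
    · rw [ae_restrict_iff' measurableSet_Ioi]
      filter_upwards with s hs
      intro x _
      have hs0 : (0:ℝ) < s := hs
      have h1 : HasDerivAt (fun x : ℝ => Real.cos (x * s)) (-Real.sin (x * s) * s) x := by
        simpa using (hasDerivAt_mul_const (x := x) s).cos
      have h2 := ((h1.sub_const 1).mul_const s⁻¹).mul_const (Real.exp (-s))
      refine h2.congr_deriv ?_
      field_simp
  have hG : ∀ c : ℝ, HasDerivAt (fun c : ℝ => -(1/2) * Real.log (1 + c ^ 2))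
      (-(c / (1 + c ^ 2))) c := by
    intro c
    have hpos : (0:ℝ) < 1 + c ^ 2 := by positivity
    have h1 : HasDerivAt (fun c : ℝ => 1 + c ^ 2) (2 * c) c := by
      simpa using (hasDerivAt_pow 2 c).const_add 1
    have h2 := (h1.log hpos.ne').const_mul (-(1/2 : ℝ))
    refine h2.congr_deriv ?_
    field_simp
  have hdiff : Differentiable ℝ (fun c => F c - -(1/2) * Real.log (1 + c ^ 2)) :=
    fun x => ((hF x).differentiableAt.sub (hG x).differentiableAt)
  have hzero : ∀ x : ℝ, deriv (fun c => F c - -(1/2) * Real.log (1 + c ^ 2)) x = 0 := by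
    intro x
    erw [((hF x).sub (hG x)).deriv]
    ring
  have hconst := is_const_of_deriv_eq_zero hdiff hzero c 0
  have hF0 : F 0 = 0 := by
    rw [hFdef]
    simp
  have h01 : (1:ℝ) + 0 ^ 2 = 1 := by norm_num
  rw [hF0, h01, Real.log_one] at hconst
  linarith [hconst]

theorem stmt_11 (α β : ℝ) (hα0 : 0 < α) (hα2 : α < 2) (hα1 : α ≠ 1)
    (hβ : β ∈ Set.Icc (-1 : ℝ) 1) :
    ∫ r in Set.Ioi (0:ℝ),
        (Real.cos (-β * Real.tan (Real.pi * α / 2) * r ^ α) - 1) * r⁻¹ * Real.exp (-(r ^ α))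
      = (1 / α) * Real.log
          (Real.cos (α * (α⁻¹ * Real.arctan (β * Real.tan (Real.pi * α / 2))))) := by
  set t := Real.tan (Real.pi * α / 2) with ht
  set c : ℝ := -β * t with hc
  have hαne : α ≠ 0 := hα0.ne'
  -- substitution
  have hsub := MeasureTheory.integral_comp_rpow_Ioi
    (fun y => (Real.cos (c * y) - 1) * y⁻¹ * Real.exp (-y)) hαne
  have hLHS : ∫ r in Set.Ioi (0:ℝ),
      (Real.cos (c * r ^ α) - 1) * r⁻¹ * Real.exp (-(r ^ α))
      = (1 / α) * ∫ y in Set.Ioi (0:ℝ), (Real.cos (c * y) - 1) * y⁻¹ * Real.exp (-y) := by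
    rw [← hsub, ← integral_const_mul]
    refine setIntegral_congr_fun measurableSet_Ioi ?_
    intro x hx
    have hx0 : (0:ℝ) < x := hx
    have hxα : (0:ℝ) < x ^ α := Real.rpow_pos_of_pos hx0 α
    have hxm : x ^ (α - 1) = x ^ α / x := by
      rw [Real.rpow_sub hx0, Real.rpow_one]
    simp only [smul_eq_mul, abs_of_pos hα0, hxm]
    field_simp
  rw [hLHS, F_value]
  -- RHS
  have harg : α * (α⁻¹ * Real.arctan (β * t)) = Real.arctan (β * t) := by
    field_simp
  rw [harg, Real.cos_arctan]
  have h1 : (0:ℝ) < 1 + (β * t) ^ 2 := by positivity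
  rw [Real.log_div one_ne_zero (by positivity), Real.log_one,
    Real.log_sqrt h1.le]
  have hc2 : c ^ 2 = (β * t) ^ 2 := by rw [hc]; ring
  rw [hc2]
  ring
end
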